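/- Let a₊, a₋ ∈ (0,2)\{1}, let C₊, C₋, λ₊, λ₋, μ₊, μ₋ > 0 and T > 0. Define r : ℝ → ℝ by r(x) = exp(−(λ₊−μ₊)x²/2) for x > 0 and r(x) = exp(−(λ₋−μ₋)x²/2) for x < 0, and let ℓ̃ be the RDTS Lévy density with parameters (a₊, a₋, C₊, C₋, μ₊, μ₋). Then T·∫_ℝ (r(x) − log r(x) − 1)·ℓ̃(x) dx = 2^{−1−a₊/2}·T·C₊·Γ(−a₊/2)·( (a₊/2 − 1)·μ₊^{a₊/2} − (a₊/2)·λ₊·μ₊^{a₊/2−1} + λ₊^{a₊/2} ) + 2^{−1−a₋/2}·T·C₋·Γ(−a₋/2)·( (a₋/2 − 1)·μ₋^{a₋/2} − (a₋/2)·λ₋·μ₋^{a₋/2−1} + λ₋^{a₋/2} ). -/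

import Mathlib

/-!
On `x > 0`, `r - log r - 1 = e^{-(λ-μ)x²/2} + (λ-μ)x²/2 - 1`, so the integrand splits as
`C (e^{-λx²/2} - 1) x^{-a-1} - C (e^{-μx²/2} - 1) x^{-a-1} + C (λ-μ)/2 · x^{1-a} e^{-μx²/2}`.
The last term is a Gaussian moment, `∫₀^∞ x^{1-a} e^{-bx²} dx = b^{a/2-1} Γ(1 - a/2) / 2`, and an
integration by parts against `x^{-a}` reduces `∫₀^∞ (e^{-bx²} - 1) x^{-a-1} dx` to the same moment,
whence it equals `b^{a/2} Γ(-a/2) / 2` by `Γ(1 - a/2) = -(a/2) Γ(-a/2)`. The half-line `x < 0` is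
the same computation after `x ↦ -x`.
-/

open MeasureTheory Real Set

/-- The RDTS (rapidly-decreasing tempered stable) Lévy density with parameters
`(a₊, a₋, C₊, C₋, θ₊, θ₋)`. -/
noncomputable def rdtsDensity (ap am Cp Cm tp tm : ℝ) (x : ℝ) : ℝ :=
  if 0 < x then Cp * exp (-(tp * x ^ 2 / 2)) * x ^ (-ap - 1)
  else if x < 0 then Cm * exp (-(tm * x ^ 2 / 2)) * |x| ^ (-am - 1)
  else 0

open Filter Topology

lemma abs_exp_neg_sub_one_le {y : ℝ} (hy : 0 ≤ y) : |exp (-y) - 1| ≤ y := by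
  rw [abs_of_nonpos (by simpa using hy)]
  linarith [one_sub_le_exp_neg y]

lemma abs_exp_neg_sub_one_le_one {y : ℝ} (hy : 0 ≤ y) : |exp (-y) - 1| ≤ 1 := by
  rw [abs_of_nonpos (by simpa using hy)]
  linarith [exp_pos (-y)]

lemma integral_eq_integral_Ioi_add_integral_Ioi_comp_neg {E : Type*} [NormedAddCommGroup E]
    [NormedSpace ℝ E] {f : ℝ → E} (hpos : IntegrableOn f (Ioi 0))
    (hneg : IntegrableOn (fun x => f (-x)) (Ioi 0)) :
    ∫ x, f x = (∫ x in Ioi 0, f x) + ∫ x in Ioi 0, f (-x) := by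
  have hIic : IntegrableOn f (Iic 0) := by
    rw [integrableOn_Iic_iff_integrableOn_Iio, ← (Measure.measurePreserving_neg volume)
      |>.integrableOn_comp_preimage (Homeomorph.neg ℝ).measurableEmbedding]
    simpa [Function.comp_def] using hneg
  rw [integral_comp_neg_Ioi, neg_zero, add_comm]
  exact (intervalIntegral.integral_Iic_add_Ioi hIic hpos).symm

section

variable {a b : ℝ}

lemma integral_rpow_one_sub_mul_exp_neg_mul_sq (ha : a < 2) (ha0 : a ≠ 0) (hb : 0 < b) :
    ∫ x in Ioi 0, x ^ (1 - a) * exp (-b * x ^ 2)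
      = -(a * b ^ (a / 2) * Gamma (-(a / 2))) / (4 * b) := by
  have h := integral_rpow_mul_exp_neg_mul_rpow two_pos (by linarith : -1 < 1 - a) hb
  simp only [rpow_two] at h
  rw [h, show (1 - a + 1) / 2 = -(a / 2) + 1 by ring, Gamma_add_one (by simpa using ha0),
    show -(1 - a + 1) / 2 = a / 2 - 1 by ring, rpow_sub_one hb.ne']
  field_simp
  ring

lemma integrableOn_exp_neg_mul_sq_sub_one_mul_rpow (ha : a ∈ Ioo 0 2) (hb : 0 ≤ b) :
    IntegrableOn (fun x : ℝ => (exp (-b * x ^ 2) - 1) * x ^ (-a - 1)) (Ioi 0) := by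
  have hmeas : AEStronglyMeasurable (fun x : ℝ => (exp (-b * x ^ 2) - 1) * x ^ (-a - 1)) :=
    Measurable.aestronglyMeasurable (by fun_prop)
  rw [← Ioc_union_Ioi_eq_Ioi zero_le_one, integrableOn_union]
  constructor
  · have hmaj : IntegrableOn (fun x : ℝ => b * x ^ (1 - a)) (Ioc 0 1) :=
      (intervalIntegral.intervalIntegrable_rpow' (by linarith [ha.2])).1.const_mul b
    refine hmaj.mono' hmeas.restrict ?_
    filter_upwards [ae_restrict_mem measurableSet_Ioc] with x hx
    rw [norm_mul, norm_of_nonneg (rpow_nonneg hx.1.le _), neg_mul,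
      show x ^ (1 - a) = x ^ 2 * x ^ (-a - 1) by
        rw [← rpow_two, ← rpow_add hx.1]; ring_nf, ← mul_assoc]
    exact mul_le_mul_of_nonneg_right (abs_exp_neg_sub_one_le (by positivity))
      (rpow_nonneg hx.1.le _)
  · refine (integrableOn_Ioi_rpow_of_lt (by linarith [ha.1] : -a - 1 < -1) one_pos).mono'
      hmeas.restrict ?_
    filter_upwards [ae_restrict_mem measurableSet_Ioi] with x (hx : 1 < x)
    rw [norm_mul, norm_of_nonneg (rpow_nonneg (by linarith) _), neg_mul]
    exact mul_le_of_le_one_left (rpow_nonneg (by linarith) _)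
      (abs_exp_neg_sub_one_le_one (by positivity))

lemma integral_exp_neg_mul_sq_sub_one_mul_rpow (ha : a ∈ Ioo 0 2) (hb : 0 < b) :
    ∫ x in Ioi 0, (exp (-b * x ^ 2) - 1) * x ^ (-a - 1) = b ^ (a / 2) * Gamma (-(a / 2)) / 2 := by
  obtain ⟨ha0, ha2⟩ := ha
  set u : ℝ → ℝ := fun x => exp (-b * x ^ 2) - 1
  set v : ℝ → ℝ := fun x => x ^ (-a) / (-a)
  have hu : ∀ x ∈ Ioi (0 : ℝ), HasDerivAt u (-(2 * b) * (x * exp (-b * x ^ 2))) x := by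
    intro x _
    refine (((hasDerivAt_pow 2 x).const_mul (-b)).exp.sub_const 1).congr_deriv ?_
    push_cast
    ring
  have hv : ∀ x ∈ Ioi (0 : ℝ), HasDerivAt v (x ^ (-a - 1)) x := by
    intro x hx
    refine ((hasDerivAt_rpow_const (p := -a) (Or.inl (ne_of_gt hx))).div_const (-a)).congr_deriv ?_
    field_simp
  have hu'v : EqOn (fun x => -(2 * b) * (x * exp (-b * x ^ 2)) * v x)
      (fun x => 2 * b / a * (x ^ (1 - a) * exp (-b * x ^ 2))) (Ioi 0) := by
    intro x hx
    simp only [v, show x ^ (1 - a) = x * x ^ (-a) by rw [sub_eq_add_neg, rpow_add hx, rpow_one]]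
    field_simp
  have h_zero : Tendsto (u * v) (𝓝[>] 0) (𝓝 0) := by
    have hpow : Tendsto (fun x : ℝ => b / a * x ^ (2 - a)) (𝓝[>] 0) (𝓝 0) := by
      have h := (continuousAt_rpow_const 0 (2 - a) (Or.inr (by linarith))).tendsto.const_mul
        (b / a)
      rw [zero_rpow (by linarith), mul_zero] at h
      exact h.mono_left nhdsWithin_le_nhds
    refine squeeze_zero_norm' ?_ hpow
    filter_upwards [self_mem_nhdsWithin] with x (hx : 0 < x)
    rw [Pi.mul_apply, norm_mul, norm_div, norm_neg, norm_of_nonneg (rpow_nonneg hx.le _),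
      norm_of_nonneg ha0.le, show x ^ (2 - a) = x ^ 2 * x ^ (-a) by
        rw [sub_eq_add_neg, rpow_add hx, rpow_two]]
    have hux : ‖u x‖ ≤ b * x ^ 2 := by
      simpa [u, neg_mul] using abs_exp_neg_sub_one_le (by positivity : 0 ≤ b * x ^ 2)
    calc ‖u x‖ * (x ^ (-a) / a) ≤ b * x ^ 2 * (x ^ (-a) / a) := by gcongr
      _ = b / a * (x ^ 2 * x ^ (-a)) := by ring
  have h_infty : Tendsto (u * v) atTop (𝓝 0) := by
    have hexp : Tendsto (fun x : ℝ => exp (-b * x ^ 2)) atTop (𝓝 0) :=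
      tendsto_exp_atBot.comp ((tendsto_pow_atTop two_ne_zero).const_mul_atTop_of_neg (by linarith))
    have h := (hexp.sub_const 1).mul ((tendsto_rpow_neg_atTop ha0).div_const (-a))
    rwa [zero_div, mul_zero] at h
  rw [integral_Ioi_mul_deriv_eq_deriv_mul hu hv
    (integrableOn_exp_neg_mul_sq_sub_one_mul_rpow ⟨ha0, ha2⟩ hb.le)
    (IntegrableOn.congr_fun
      (Integrable.const_mul (integrableOn_rpow_mul_exp_neg_mul_sq hb (by linarith)) _)
      hu'v.symm measurableSet_Ioi) h_zero h_infty,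
    setIntegral_congr_fun measurableSet_Ioi hu'v, integral_const_mul,
    integral_rpow_one_sub_mul_exp_neg_mul_sq ha2 ha0.ne' hb]
  field_simp
  ring

end

section

/-- The integrand `(r - log r - 1) ℓ̃` of the 1-divergence at `x > 0`, where
`r x = exp (-(l - m) x² / 2)` and `ℓ̃` has index `a`, scale `C` and tempering `m` there. -/
noncomputable def rdtsDualKLIntegrand (a C l m x : ℝ) : ℝ :=
  (exp (-((l - m) * x ^ 2 / 2)) + (l - m) * x ^ 2 / 2 - 1) *
    (C * exp (-(m * x ^ 2 / 2)) * x ^ (-a - 1))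

lemma rdtsDualKLIntegrand_eqOn (a C l m : ℝ) :
    EqOn (rdtsDualKLIntegrand a C l m)
      (fun x => C * ((exp (-(l / 2) * x ^ 2) - 1) * x ^ (-a - 1))
        - C * ((exp (-(m / 2) * x ^ 2) - 1) * x ^ (-a - 1))
        + C * (l - m) / 2 * (x ^ (1 - a) * exp (-(m / 2) * x ^ 2))) (Ioi 0) := by
  intro x (hx : 0 < x)
  have hexp : exp (-((l - m) * x ^ 2 / 2)) * exp (-(m * x ^ 2 / 2)) = exp (-(l / 2) * x ^ 2) := by
    rw [← exp_add]; ring_nf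
  have hpow : x ^ (1 - a) = x ^ 2 * x ^ (-a - 1) := by
    rw [← rpow_two, ← rpow_add hx]; ring_nf
  have hm : exp (-(m / 2) * x ^ 2) = exp (-(m * x ^ 2 / 2)) := by ring_nf
  simp only [rdtsDualKLIntegrand]
  rw [hpow, hm, ← hexp]
  ring

variable {a C l m : ℝ}

lemma integrableOn_rdtsDualKLIntegrand (ha : a ∈ Ioo 0 2) (hl : 0 < l) (hm : 0 < m) :
    IntegrableOn (rdtsDualKLIntegrand a C l m) (Ioi 0) := by
  refine IntegrableOn.congr_fun ?_ (rdtsDualKLIntegrand_eqOn a C l m).symm measurableSet_Ioi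
  exact (((integrableOn_exp_neg_mul_sq_sub_one_mul_rpow ha (by positivity)).const_mul C).sub
    ((integrableOn_exp_neg_mul_sq_sub_one_mul_rpow ha (by positivity)).const_mul C)).add
    (Integrable.const_mul (integrableOn_rpow_mul_exp_neg_mul_sq (by positivity)
      (by linarith [ha.2])) _)

lemma integral_rdtsDualKLIntegrand (ha : a ∈ Ioo 0 2) (hl : 0 < l) (hm : 0 < m) :
    ∫ x in Ioi 0, rdtsDualKLIntegrand a C l m x
      = 2 ^ (-1 - a / 2) * C * Gamma (-(a / 2)) *
          ((a / 2 - 1) * m ^ (a / 2) - a / 2 * l * m ^ (a / 2 - 1) + l ^ (a / 2)) := by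
  have hint (θ : ℝ) (hθ : 0 < θ) :=
    (integrableOn_exp_neg_mul_sq_sub_one_mul_rpow ha (by positivity : 0 ≤ θ / 2)).const_mul C
  have hdiff : IntegrableOn (fun x => C * ((exp (-(l / 2) * x ^ 2) - 1) * x ^ (-a - 1))
      - C * ((exp (-(m / 2) * x ^ 2) - 1) * x ^ (-a - 1))) (Ioi 0) :=
    (hint l hl).sub (hint m hm)
  rw [setIntegral_congr_fun measurableSet_Ioi (rdtsDualKLIntegrand_eqOn a C l m),
    integral_add hdiff
      (Integrable.const_mul (integrableOn_rpow_mul_exp_neg_mul_sq (by positivity)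
        (by linarith [ha.2])) _),
    integral_sub (hint l hl) (hint m hm), integral_const_mul, integral_const_mul,
    integral_const_mul, integral_exp_neg_mul_sq_sub_one_mul_rpow ha (by positivity),
    integral_exp_neg_mul_sq_sub_one_mul_rpow ha (by positivity),
    integral_rpow_one_sub_mul_exp_neg_mul_sq ha.2 ha.1.ne' (by positivity),
    div_rpow hl.le zero_le_two, div_rpow hm.le zero_le_two, rpow_sub_one hm.ne',
    rpow_sub two_pos, rpow_neg_one]
  have : (0 : ℝ) < 2 ^ (a / 2) := by positivity
  field_simp
  ring

end

theorem rdts_dual_kl_divergence_general (ap am Cp Cm lp lm mp mm T : ℝ)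
    (hap : ap ∈ Ioo (0:ℝ) 2)
    (ham : am ∈ Ioo (0:ℝ) 2)
    (hlp : 0 < lp) (hlm : 0 < lm)
    (hmp : 0 < mp) (hmm : 0 < mm)
    (r : ℝ → ℝ)
    (hrp : ∀ x : ℝ, 0 < x → r x = exp (-((lp - mp) * x ^ 2 / 2)))
    (hrm : ∀ x : ℝ, x < 0 → r x = exp (-((lm - mm) * x ^ 2 / 2))) :
    T * ∫ x : ℝ, (r x - Real.log (r x) - 1) * rdtsDensity ap am Cp Cm mp mm x
      = (2:ℝ) ^ (-1 - ap / 2) * T * Cp * Gamma (-(ap / 2)) *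
          ((ap / 2 - 1) * mp ^ (ap / 2) - (ap / 2) * lp * mp ^ (ap / 2 - 1) + lp ^ (ap / 2))
        + (2:ℝ) ^ (-1 - am / 2) * T * Cm * Gamma (-(am / 2)) *
          ((am / 2 - 1) * mm ^ (am / 2) - (am / 2) * lm * mm ^ (am / 2 - 1) + lm ^ (am / 2)) := by
  set f := fun x => (r x - Real.log (r x) - 1) * rdtsDensity ap am Cp Cm mp mm x
  have hpos : EqOn f (rdtsDualKLIntegrand ap Cp lp mp) (Ioi 0) := by
    intro x (hx : 0 < x)
    simp only [f, rdtsDensity, if_pos hx, hrp x hx, log_exp, rdtsDualKLIntegrand]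
    ring
  have hneg : EqOn (fun x => f (-x)) (rdtsDualKLIntegrand am Cm lm mm) (Ioi 0) := by
    intro x (hx : 0 < x)
    have hx' : -x < 0 := neg_neg_of_pos hx
    simp only [f, rdtsDensity, if_neg hx'.not_gt, if_pos hx', hrm _ hx', log_exp, neg_sq, abs_neg,
      abs_of_pos hx, rdtsDualKLIntegrand]
    ring
  rw [integral_eq_integral_Ioi_add_integral_Ioi_comp_neg
      ((integrableOn_rdtsDualKLIntegrand hap hlp hmp).congr_fun hpos.symm measurableSet_Ioi)
      ((integrableOn_rdtsDualKLIntegrand ham hlm hmm).congr_fun hneg.symm measurableSet_Ioi),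
    setIntegral_congr_fun measurableSet_Ioi hpos, setIntegral_congr_fun measurableSet_Ioi hneg,
    integral_rdtsDualKLIntegrand hap hlp hmp, integral_rdtsDualKLIntegrand ham hlm hmm]
  ring

/-- The 1-divergence (dual Kullback–Leibler divergence) between two
equivalent-martingale RDTS processes. -/
theorem rdts_dual_kl_divergence (ap am Cp Cm lp lm mp mm T : ℝ)
    (hap : ap ∈ Ioo (0:ℝ) 2) (hap1 : ap ≠ 1)
    (ham : am ∈ Ioo (0:ℝ) 2) (ham1 : am ≠ 1)
    (hCp : 0 < Cp) (hCm : 0 < Cm) (hlp : 0 < lp) (hlm : 0 < lm)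
    (hmp : 0 < mp) (hmm : 0 < mm) (hT : 0 < T)
    (r : ℝ → ℝ)
    (hrp : ∀ x : ℝ, 0 < x → r x = exp (-((lp - mp) * x ^ 2 / 2)))
    (hrm : ∀ x : ℝ, x < 0 → r x = exp (-((lm - mm) * x ^ 2 / 2))) :
    T * ∫ x : ℝ, (r x - Real.log (r x) - 1) * rdtsDensity ap am Cp Cm mp mm x
      = (2:ℝ) ^ (-1 - ap / 2) * T * Cp * Gamma (-(ap / 2)) *
          ((ap / 2 - 1) * mp ^ (ap / 2) - (ap / 2) * lp * mp ^ (ap / 2 - 1) + lp ^ (ap / 2))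
        + (2:ℝ) ^ (-1 - am / 2) * T * Cm * Gamma (-(am / 2)) *
          ((am / 2 - 1) * mm ^ (am / 2) - (am / 2) * lm * mm ^ (am / 2 - 1) + lm ^ (am / 2)) :=
  rdts_dual_kl_divergence_general ap am Cp Cm lp lm mp mm T hap ham hlp hlm hmp hmm r hrp hrm
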